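/- arXiv:0706.0431 — 2 statements merged into one kernel-verified Lean document; each statement's English description precedes it below -/
import Mathlib

section
/- Let ℓ ≥ 1 and β ≥ 1 be integers, and for n ∈ ℕ let |rep_ℓ(n)| denote the coordinate sum of rep_ℓ(n) (the length of the B_ℓ-representation of n). Then there exists N such that for every n ≥ N there exists i ∈ {0, 1, …, β} with |rep_ℓ(β^ℓ·n)| = β·|rep_ℓ(n)| + ⌈(β−1)(ℓ+1)/2⌉ − i. -/
/-- `valB ℓ n = Σ_{i=1}^{ℓ} C(n_i + ⋯ + n_ℓ + ℓ − i, ℓ − i + 1)` (0-based indexing). -/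
def valB (ℓ : ℕ) (n : Fin ℓ → ℕ) : ℕ :=
  ∑ i : Fin ℓ,
    Nat.choose ((∑ j ∈ Finset.univ.filter (fun j => i ≤ j), n j) + (ℓ - 1 - (i : ℕ)))
      (ℓ - (i : ℕ))

/-- `repB ℓ` is the inverse of the bijection `valB ℓ`. -/
noncomputable def repB (ℓ : ℕ) : ℕ → (Fin ℓ → ℕ) := Function.invFun (valB ℓ)

/-! `repB (ℓ + 1)` is the combinatorial number system: the coordinate sum `S` of
`repB (ℓ + 1) n` is the unique integer with `C(S + ℓ, ℓ + 1) ≤ n < C(S + ℓ + 1, ℓ + 1)`. With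
`e = ⌈(β - 1)(ℓ + 2) / 2⌉` it therefore suffices to show
`C(βS + e - β + ℓ, ℓ + 1) ≤ β ^ (ℓ + 1) C(S + ℓ, ℓ + 1)` and
`β ^ (ℓ + 1) C(S + ℓ + 1, ℓ + 1) ≤ C(βS + e + ℓ + 1, ℓ + 1)`. Times `(ℓ + 1)!`, each side is a
product of `ℓ + 1` terms of an arithmetic progression, of difference `β` on the `β`-side.
Pair the `j`-th term with the `(ℓ - j)`-th and use `4uv = (u + v)² - (u - v)²`: in the upper
bound the `β`-pairs have the smaller sum and the larger spread; in the lower bound they have the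
larger spread but a sum larger by at least one, which dominates once `S ≥ βℓ²`, as it is for
large `n`. -/

open Finset
open scoped Nat

theorem strictMono_add_choose (ℓ : ℕ) : StrictMono fun m => (m + ℓ).choose (ℓ + 1) :=
  strictMono_nat_of_lt_succ fun m => by
    rw [Nat.add_right_comm, Nat.choose_succ_succ']
    exact Nat.lt_add_of_pos_left (Nat.choose_pos (Nat.le_add_left ℓ m))

@[simp] theorem valB_zero (x : Fin 0 → ℕ) : valB 0 x = 0 := rfl

theorem valB_succ (ℓ : ℕ) (x : Fin (ℓ + 1) → ℕ) :
    valB (ℓ + 1) x = (∑ j, x j + ℓ).choose (ℓ + 1) + valB ℓ (Fin.tail x) := by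
  rw [valB, Fin.sum_univ_succ, valB]
  congr 1
  · simp
  refine sum_congr rfl fun i _ => ?_
  have hsum : ∑ j ∈ univ.filter (i.succ ≤ ·), x j = ∑ j ∈ univ.filter (i ≤ ·), Fin.tail x j := by
    simp [sum_filter, Fin.sum_univ_succ, Fin.succ_le_succ_iff, Fin.tail]
  rw [hsum, Fin.val_succ, show ℓ + 1 - 1 - ((i : ℕ) + 1) = ℓ - 1 - i by omega,
    Nat.add_sub_add_right]

theorem choose_le_valB_succ (ℓ : ℕ) (x : Fin (ℓ + 1) → ℕ) :
    (∑ j, x j + ℓ).choose (ℓ + 1) ≤ valB (ℓ + 1) x :=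
  (valB_succ ℓ x).ge.trans' (Nat.le_add_right _ _)

theorem valB_lt_choose (ℓ : ℕ) (x : Fin ℓ → ℕ) : valB ℓ x < (∑ j, x j + ℓ).choose ℓ := by
  induction ℓ with
  | zero => simp
  | succ ℓ ih =>
    have htail : ∑ j, Fin.tail x j ≤ ∑ j, x j := by
      rw [Fin.sum_univ_succ x]; exact Nat.le_add_left _ _
    calc valB (ℓ + 1) x
        < (∑ j, x j + ℓ).choose (ℓ + 1) + (∑ j, Fin.tail x j + ℓ).choose ℓ := by
          rw [valB_succ]; exact Nat.add_lt_add_left (ih _) _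
      _ ≤ (∑ j, x j + ℓ).choose (ℓ + 1) + (∑ j, x j + ℓ).choose ℓ := by
          gcongr
      _ = (∑ j, x j + (ℓ + 1)).choose (ℓ + 1) := by
          rw [← Nat.add_assoc, Nat.choose_succ_succ', Nat.add_comm]

theorem valB_succ_surjective (ℓ : ℕ) : Function.Surjective (valB (ℓ + 1)) := by
  induction ℓ with
  | zero => exact fun n => ⟨fun _ => n, by simp [valB_succ]⟩
  | succ ℓ ih =>
    intro n
    obtain ⟨S, hSn, hnS⟩ := (strictMono_add_choose (ℓ + 1)).exists_between_of_tendsto_atTop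
      (strictMono_add_choose (ℓ + 1)).tendsto_atTop (show _ < n + 1 by simp)
    have hpascal : (S + 1 + (ℓ + 1)).choose (ℓ + 1 + 1) =
        (S + (ℓ + 1)).choose (ℓ + 1 + 1) + (S + (ℓ + 1)).choose (ℓ + 1) := by
      rw [Nat.add_right_comm, Nat.choose_succ_succ', Nat.add_comm]
    obtain ⟨y, hy⟩ := ih (n - (S + (ℓ + 1)).choose (ℓ + 1 + 1))
    have hyS : ∑ j, y j ≤ S := by
      by_contra! h
      have := (Nat.choose_le_choose (ℓ + 1) (show S + (ℓ + 1) ≤ ∑ j, y j + ℓ by omega)).trans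
        ((choose_le_valB_succ ℓ y).trans hy.le)
      omega
    refine ⟨Fin.cons (S - ∑ j, y j) y, ?_⟩
    rw [valB_succ, Fin.sum_cons, Fin.tail_cons, hy, Nat.sub_add_cancel hyS]
    omega

theorem valB_repB (ℓ n : ℕ) : valB (ℓ + 1) (repB (ℓ + 1) n) = n :=
  Function.invFun_eq (valB_succ_surjective ℓ n)

theorem choose_sum_repB_le (ℓ n : ℕ) : (∑ j, repB (ℓ + 1) n j + ℓ).choose (ℓ + 1) ≤ n :=
  (choose_le_valB_succ ℓ _).trans (valB_repB ℓ n).le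

theorem lt_choose_sum_repB (ℓ n : ℕ) :
    n < (∑ j, repB (ℓ + 1) n j + (ℓ + 1)).choose (ℓ + 1) :=
  (valB_repB ℓ n).symm.trans_lt (valB_lt_choose (ℓ + 1) (repB (ℓ + 1) n))

theorem lt_sum_repB_iff (ℓ s n : ℕ) :
    s < ∑ j, repB (ℓ + 1) n j ↔ (s + (ℓ + 1)).choose (ℓ + 1) ≤ n := by
  constructor
  · intro h
    exact (Nat.choose_le_choose _ (by omega)).trans (choose_sum_repB_le ℓ n)
  · intro h
    by_contra! hle
    exact ((lt_choose_sum_repB ℓ n).trans_le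
      (Nat.choose_le_choose _ (Nat.add_le_add_right hle _))).not_ge h

theorem prod_range_le_prod_range_of_mul_reflect_le {f g : ℕ → ℕ} {r : ℕ}
    (h : ∀ j < r, f j * f (r - 1 - j) ≤ g j * g (r - 1 - j)) :
    ∏ j ∈ range r, f j ≤ ∏ j ∈ range r, g j := by
  have sq_prod (u : ℕ → ℕ) : (∏ j ∈ range r, u j) ^ 2 = ∏ j ∈ range r, u j * u (r - 1 - j) := by
    rw [prod_mul_distrib, prod_range_reflect, sq]
  rw [← Nat.pow_le_pow_iff_left two_ne_zero, sq_prod f, sq_prod g]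
  exact prod_le_prod (fun _ _ => Nat.zero_le _) fun j hj => h j (mem_range.1 hj)

theorem mul_le_mul_of_two_mul_add_le {A B b x y : ℕ} (hb : 1 ≤ b)
    (h : 2 * B + b * (x + y) ≤ 2 * A + (x + y)) :
    (B + b * x) * (B + b * y) ≤ (A + x) * (A + y) := by
  zify at *
  nlinarith [mul_le_mul h h (by positivity) (by positivity), mul_le_mul_of_nonneg_right
    (mul_le_mul hb hb zero_le_one (by positivity)) (sq_nonneg ((x : ℤ) - y))]

theorem mul_le_mul_of_sq_add_sq_le {A B b x y : ℕ} (hb : 1 ≤ b)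
    (h : (2 * A + (x + y)) ^ 2 + (b * (x + y)) ^ 2 ≤ (2 * B + b * (x + y)) ^ 2 + (x + y) ^ 2) :
    (A + x) * (A + y) ≤ (B + b * x) * (B + b * y) := by
  zify at *
  nlinarith [mul_le_mul_of_nonneg_right (mul_le_mul hb hb zero_le_one (by positivity))
    (mul_nonneg (by positivity : (0:ℤ) ≤ x) (by positivity : (0:ℤ) ≤ y))]

theorem pow_mul_ascFactorial (β m k : ℕ) :
    β ^ k * m.ascFactorial k = ∏ j ∈ range k, (β * m + β * j) := by
  rw [Nat.ascFactorial_eq_prod_range, ← card_range k, ← prod_const, card_range,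
    ← prod_mul_distrib]
  simp only [mul_add]

theorem pow_mul_choose_le_choose {ℓ β S e : ℕ} (hβ : 1 ≤ β)
    (he : β * (ℓ + 1) ≤ 2 * e + ℓ + 1) :
    β ^ ℓ * (S + ℓ).choose ℓ ≤ (β * S + e + ℓ).choose ℓ := by
  refine Nat.le_of_mul_le_mul_left (?_ : ℓ ! * _ ≤ ℓ ! * _) ℓ.factorial_pos
  rw [mul_left_comm, ← Nat.ascFactorial_eq_factorial_mul_choose,
    ← Nat.ascFactorial_eq_factorial_mul_choose, pow_mul_ascFactorial,
    Nat.ascFactorial_eq_prod_range]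
  refine prod_range_le_prod_range_of_mul_reflect_le fun j hj => ?_
  obtain ⟨k, hk⟩ : ∃ k, ℓ = j + k + 1 := ⟨ℓ - 1 - j, by omega⟩
  rw [show ℓ - 1 - j = k by omega]
  subst hk
  apply mul_le_mul_of_two_mul_add_le hβ
  nlinarith

theorem choose_le_pow_mul_choose {ℓ β S T : ℕ} (hβ : 1 ≤ β) (hS : β * ℓ ^ 2 ≤ S)
    (hT : 2 * T + ℓ < β * (2 * S + ℓ)) :
    (T + ℓ).choose (ℓ + 1) ≤ β ^ (ℓ + 1) * (S + ℓ).choose (ℓ + 1) := by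
  refine Nat.le_of_mul_le_mul_left (?_ : (ℓ + 1)! * _ ≤ (ℓ + 1)! * _) (ℓ + 1).factorial_pos
  have h (n : ℕ) : n.ascFactorial (ℓ + 1) = (ℓ + 1)! * (n + ℓ).choose (ℓ + 1) := by
    rw [Nat.ascFactorial_eq_factorial_mul_choose', Nat.add_succ_sub_one]
  rw [mul_left_comm, ← h, ← h, pow_mul_ascFactorial, Nat.ascFactorial_eq_prod_range]
  refine prod_range_le_prod_range_of_mul_reflect_le fun j hj => ?_
  rw [Nat.add_sub_cancel]
  apply mul_le_mul_of_sq_add_sq_le hβ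
  rw [Nat.add_sub_cancel' (by omega : j ≤ ℓ)]
  have hv : (β * ℓ) ^ 2 ≤ 2 * (β * S) + β * ℓ := by nlinarith
  nlinarith

/-- For sufficiently large `n`, `|rep_ℓ(β^ℓ n)| = β|rep_ℓ(n)| + ⌈(β−1)(ℓ+1)/2⌉ − i` for
some `i ∈ {0, …, β}` (stated additively to avoid truncated subtraction; the ceiling
`⌈(β−1)(ℓ+1)/2⌉` is written as `((β−1)(ℓ+1) + 1) / 2` in natural division). -/
theorem repB_length_of_mul_pow (ℓ β : ℕ) (hℓ : 1 ≤ ℓ) (hβ : 1 ≤ β) :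
    ∃ N : ℕ, ∀ n ≥ N, ∃ i ≤ β,
      (∑ j : Fin ℓ, repB ℓ (β ^ ℓ * n) j) + i =
        β * (∑ j : Fin ℓ, repB ℓ n j) + ((β - 1) * (ℓ + 1) + 1) / 2 := by
  obtain ⟨L, rfl⟩ : ∃ L, ℓ = L + 1 := ⟨ℓ - 1, by omega⟩
  obtain ⟨e, he, he_le, le_he⟩ : ∃ e, e = ((β - 1) * (L + 1 + 1) + 1) / 2 ∧
      β * (L + 1 + 1) ≤ 2 * e + L + 2 ∧ 2 * e + L + 1 ≤ β * (L + 1 + 1) := by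
    obtain ⟨γ, rfl⟩ : ∃ γ, β = γ + 1 := ⟨β - 1, by omega⟩
    refine ⟨_, rfl, ?_, ?_⟩ <;>
      simp only [Nat.add_sub_cancel, Nat.add_mul, Nat.one_mul] <;> omega
  refine ⟨(β * L ^ 2 + (L + 1)).choose (L + 1), fun n hn => ?_⟩
  rw [← he]
  set S := ∑ j, repB (L + 1) n j
  set S' := ∑ j, repB (L + 1) (β ^ (L + 1) * n) j
  have hS : β * L ^ 2 < S := (lt_sum_repB_iff L _ n).2 hn
  have hupper : S' ≤ β * S + e := by
    by_contra! h
    have h1 := (lt_sum_repB_iff L _ _).1 h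
    have h2 : β ^ (L + 1) * n < (β * S + e + (L + 1)).choose (L + 1) :=
      ((Nat.mul_lt_mul_left (by positivity)).2 (lt_choose_sum_repB L n)).trans_le
        (pow_mul_choose_le_choose hβ (by linarith))
    exact (h2.trans_le h1).false
  have hlower : β * S + e ≤ S' + β := by
    by_contra! h
    have h1 := choose_le_pow_mul_choose (T := S' + 1) hβ hS.le (by nlinarith)
    have h2 := Nat.mul_le_mul_left (β ^ (L + 1)) (choose_sum_repB_le L n)
    rw [Nat.add_right_comm] at h1
    exact ((lt_choose_sum_repB L _).trans_le (h1.trans h2)).false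
  exact ⟨β * S + e - S', by omega, by omega⟩
end

section
/- Let ℓ ≥ 1 and β ≥ 1 be integers with constants c_{ℓ−1}, …, c_0 defined by the stated recursion. Assume every c_k is an integer and c_{ℓ−1} ≥ c_{ℓ−2} ≥ ⋯ ≥ c_0. Then for every q ∈ ℕ with β·q + c_0 ≥ 0, rep_ℓ(β^ℓ · val_ℓ(0,…,0,q)) = (c_{ℓ−1}−c_{ℓ−2}, c_{ℓ−2}−c_{ℓ−3}, …, c_1−c_0, β·q + c_0); in particular, the language {word(rep_ℓ(β^ℓ · val_ℓ(0,…,0,q))) : q ∈ ℕ} is regular. -/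
/-
Read from the last letter backwards, `val_ℓ(n) = Σ_k C(b_k, k + 1)` with
`b_k = n_{ℓ-k} + ⋯ + n_ℓ + k` strictly increasing; this is the combinatorial number system, so
`val_ℓ` is injective and `rep_ℓ` inverts it. Since `C(s + k, k + 1) = s^(k+1)/(k + 1)!` with the
rising factorial `s^(k+1)`, a tuple whose suffix sums are `s_0, …, s_{ℓ-1}` has value
`R(s) = Σ_k s_k^(k+1)/(k + 1)!`. The tuple `(c_{ℓ-1} - c_{ℓ-2}, …, c_1 - c_0, βq + c_0)` has suffix
sums `βq + c_k`, and expanding the rising factorials with Stirling numbers and `(βq + c_k)^j`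
binomially, the recursion for `c_k` says exactly that `R(βq + c)` and `β^ℓ R(q)` have the same
coefficient of `q^k`. Integrality and monotonicity of the `c_k` make this a tuple of naturals.
For `q ≥ -c_0` these representations differ only in their last entry, which grows by `β` with `q`,
so the language is a finite set together with `u (a_ℓ^β)^*`, regular by Myhill–Nerode.
-/

/-- Unsigned Stirling numbers of the first kind: `x(x+1)⋯(x+i−1) = Σ_j S₁(i,j) x^j`,
with `S₁(i,j) = 0` for `j = 0` (or `i < j`). -/
noncomputable def S1 (i j : ℕ) : ℕ := if j = 0 then 0 else (ascPochhammer ℕ i).coeff j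

/-- The word `a_1^{n_1} a_2^{n_2} ⋯ a_ℓ^{n_ℓ}` over the alphabet `Fin ℓ`. -/
def wordB (ℓ : ℕ) (n : Fin ℓ → ℕ) : List (Fin ℓ) :=
  (List.ofFn (fun i : Fin ℓ => List.replicate (n i) i)).flatten

/-- The tuple `(0, …, 0, q) ∈ ℕ^ℓ`, i.e. the word `a_ℓ^q`. -/
def lastTuple (ℓ q : ℕ) : Fin ℓ → ℕ := fun i => if (i : ℕ) = ℓ - 1 then q else 0

open Finset Polynomial
open scoped Nat

theorem S1_eq_zero_of_lt {i j : ℕ} (h : i < j) : S1 i j = 0 := by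
  have : (ascPochhammer ℕ i).natDegree < j := by rwa [ascPochhammer_natDegree]
  simp [S1, coeff_eq_zero_of_natDegree_lt this]

theorem S1_self {i : ℕ} (hi : i ≠ 0) : S1 i i = 1 := by
  simpa [S1, hi, ascPochhammer_natDegree] using (monic_ascPochhammer ℕ i).coeff_natDegree

theorem S1_zero_left (j : ℕ) : S1 0 j = 0 := by
  rcases j.eq_zero_or_pos with rfl | hj
  · rfl
  · exact S1_eq_zero_of_lt hj

theorem ascPochhammer_eval_eq_sum_S1 {R : Type*} [CommSemiring R] {r N : ℕ} (hr : r ≠ 0)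
    (hrN : r ≤ N) (y : R) :
    (ascPochhammer R r).eval y = ∑ j ∈ range (N + 1), (S1 r j : R) * y ^ j := by
  rw [← ascPochhammer_map (Nat.castRingHom R), eval_map, eval₂_eq_sum_range' _
    (n := N + 1) (by rw [ascPochhammer_natDegree]; omega)]
  refine sum_congr rfl fun j _ => ?_
  rcases eq_or_ne j 0 with rfl | hj
  · simp [S1, coeff_zero_eq_eval_zero, hr]
  · simp [S1, hj]

section CombinatorialNumberSystem

variable {b b' : ℕ → ℕ}

theorem sum_choose_lt_choose (hb : StrictMono b) (m : ℕ) :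
    ∑ k ∈ range (m + 1), (b k).choose (k + 1) < (b m + 1).choose (m + 1) := by
  induction m with
  | zero => simp
  | succ m ih =>
    have hbm : b m + 1 ≤ b (m + 1) := hb (Nat.lt_succ_self m)
    calc ∑ k ∈ range (m + 1 + 1), (b k).choose (k + 1)
        < (b m + 1).choose (m + 1) + (b (m + 1)).choose (m + 1 + 1) := by
          rw [sum_range_succ]; omega
      _ ≤ (b (m + 1)).choose (m + 1) + (b (m + 1)).choose (m + 1 + 1) := by gcongr
      _ = (b (m + 1) + 1).choose (m + 1 + 1) := (Nat.choose_succ_succ' _ _).symm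

theorem sum_choose_lt_sum_choose_of_lt (hb : StrictMono b) {m : ℕ} (h : b m < b' m) :
    ∑ k ∈ range (m + 1), (b k).choose (k + 1) < ∑ k ∈ range (m + 1), (b' k).choose (k + 1) :=
  calc _ < (b m + 1).choose (m + 1) := sum_choose_lt_choose hb m
    _ ≤ (b' m).choose (m + 1) := Nat.choose_le_choose _ h
    _ ≤ _ := single_le_sum (f := fun k => (b' k).choose (k + 1)) (fun _ _ => Nat.zero_le _)
      (self_mem_range_succ m)

theorem eq_of_sum_choose_eq (hb : StrictMono b) (hb' : StrictMono b') {m : ℕ}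
    (h : ∑ k ∈ range m, (b k).choose (k + 1) = ∑ k ∈ range m, (b' k).choose (k + 1)) :
    ∀ k < m, b k = b' k := by
  induction m with
  | zero => simp
  | succ m ih =>
    have htop : b m = b' m := le_antisymm
      (not_lt.1 fun hlt => (sum_choose_lt_sum_choose_of_lt hb' hlt).ne h.symm)
      (not_lt.1 fun hlt => (sum_choose_lt_sum_choose_of_lt hb hlt).ne h)
    rw [sum_range_succ, sum_range_succ, htop, add_left_inj] at h
    intro k hk
    rcases (Nat.lt_succ_iff_lt_or_eq.1 hk) with hk | rfl
    exacts [ih h k hk, htop]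

end CombinatorialNumberSystem

noncomputable def risingSum (ℓ : ℕ) (x : ℕ → ℚ) : ℚ :=
  ∑ k ∈ range ℓ, (ascPochhammer ℚ (k + 1)).eval (x k) / (k + 1)!

def diffTuple (ℓ : ℕ) (d : ℕ → ℚ) (i : Fin ℓ) : ℚ :=
  if (i : ℕ) = ℓ - 1 then d 0 else d (ℓ - 1 - i) - d (ℓ - 2 - i)

def SatisfiesCRecursion (ℓ β : ℕ) (c : ℕ → ℚ) : Prop :=
  ∀ k < ℓ, c k = k ! * ((β : ℚ) ^ (ℓ - k) - 1) * (∑ i ∈ Icc k ℓ, (S1 i k : ℚ) / i !) -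
    ∑ i ∈ Icc (k + 2) ℓ, ∑ j ∈ Icc (k + 1) i, S1 i j * j ! / (i ! * (j - k)!) * c (i - 1) ^ (j - k)

/-- The coefficient of `y ^ k` in `S₁(r, j) / r! * (y + a (r - 1)) ^ j`. -/
noncomputable def shiftCoeff (a : ℕ → ℚ) (r j k : ℕ) : ℚ :=
  S1 r j / r ! * j.choose k * a (r - 1) ^ (j - k)

section ValB

variable {ℓ : ℕ}

def suffixSum (n : Fin ℓ → ℕ) (t : ℕ) : ℕ := ∑ j ∈ univ.filter (fun j : Fin ℓ => t ≤ j), n j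

theorem suffixSum_eq_add (n : Fin ℓ → ℕ) {t : ℕ} (ht : t < ℓ) :
    suffixSum n t = n ⟨t, ht⟩ + suffixSum n (t + 1) := by
  rw [suffixSum, suffixSum, ← sum_insert (by simp)]
  congr 1
  ext j
  simp only [mem_filter, mem_univ, true_and, mem_insert, Fin.ext_iff]
  omega

theorem suffixSum_of_le (n : Fin ℓ → ℕ) {t : ℕ} (ht : ℓ ≤ t) : suffixSum n t = 0 :=
  sum_eq_zero fun j hj => absurd (mem_filter.1 hj).2 (by omega)

theorem suffixSum_antitone (n : Fin ℓ → ℕ) : Antitone (suffixSum n) := fun s t hst =>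
  sum_le_sum_of_subset (fun j => by simp only [mem_filter, mem_univ, true_and]; omega)

theorem suffixSum_injective : Function.Injective (suffixSum (ℓ := ℓ)) := by
  intro n n' h
  funext j
  have := suffixSum_eq_add n j.2
  rw [congrFun h, congrFun h, suffixSum_eq_add n' j.2] at this
  simpa using this.symm

theorem suffixSum_lastTuple {q t : ℕ} (ht : t < ℓ) : suffixSum (lastTuple ℓ q) t = q := by
  rw [suffixSum, sum_eq_single_of_mem ⟨ℓ - 1, by omega⟩
    (by simp only [mem_filter, mem_univ, true_and]; omega)]
  · simp [lastTuple]
  · intro j _ hj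
    simp [lastTuple, Fin.ext_iff.not.1 hj]

theorem valB_eq_sum_choose (n : Fin ℓ → ℕ) :
    valB ℓ n = ∑ k ∈ range ℓ, (suffixSum n (ℓ - 1 - k) + k).choose (k + 1) := by
  change ∑ i : Fin ℓ, (suffixSum n i + (ℓ - 1 - i)).choose (ℓ - i) = _
  rw [Fin.sum_univ_eq_sum_range (fun i => (suffixSum n i + (ℓ - 1 - i)).choose (ℓ - i)),
    ← sum_range_reflect]
  refine sum_congr rfl fun k hk => ?_
  have hk : k < ℓ := mem_range.1 hk
  rw [show ℓ - 1 - (ℓ - 1 - k) = k by omega, show ℓ - (ℓ - 1 - k) = k + 1 by omega]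

theorem valB_injective : Function.Injective (valB ℓ) := by
  intro n n' h
  have hb (n : Fin ℓ → ℕ) : StrictMono fun k => suffixSum n (ℓ - 1 - k) + k :=
    strictMono_nat_of_lt_succ fun k => by
      have := suffixSum_antitone n (show ℓ - 1 - (k + 1) ≤ ℓ - 1 - k by omega)
      omega
  rw [valB_eq_sum_choose, valB_eq_sum_choose] at h
  have hsuf := eq_of_sum_choose_eq (hb n) (hb n') h
  apply suffixSum_injective
  funext t
  rcases lt_or_ge t ℓ with ht | ht
  · have := hsuf (ℓ - 1 - t) (by omega)
    rwa [show ℓ - 1 - (ℓ - 1 - t) = t by omega, add_left_inj] at this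
  · rw [suffixSum_of_le n ht, suffixSum_of_le n' ht]

theorem risingSum_congr {x y : ℕ → ℚ} (h : ∀ k < ℓ, x k = y k) :
    risingSum ℓ x = risingSum ℓ y :=
  sum_congr rfl fun k hk => by rw [h k (mem_range.1 hk)]

theorem cast_valB (n : Fin ℓ → ℕ) :
    (valB ℓ n : ℚ) = risingSum ℓ fun k => suffixSum n (ℓ - 1 - k) := by
  rw [valB_eq_sum_choose, Nat.cast_sum, risingSum]
  refine sum_congr rfl fun k _ => ?_
  rw [Nat.cast_choose_eq_ascPochhammer_div, Nat.add_sub_cancel, Nat.add_sub_cancel]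

theorem cast_valB_lastTuple (q : ℕ) : (valB ℓ (lastTuple ℓ q) : ℚ) = risingSum ℓ fun _ => q := by
  rw [cast_valB]
  exact risingSum_congr fun k hk => by rw [suffixSum_lastTuple (by omega)]

theorem cast_suffixSum_eq {N : Fin ℓ → ℕ} {d : ℕ → ℚ}
    (hN : ∀ i, (N i : ℚ) = diffTuple ℓ d i) {k : ℕ} (hk : k < ℓ) :
    (suffixSum N (ℓ - 1 - k) : ℚ) = d k := by
  induction k with
  | zero =>
    rw [suffixSum_eq_add N (by omega), suffixSum_of_le N (by omega), Nat.cast_add, hN,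
      diffTuple, if_pos (by simp)]
    simp
  | succ k ih =>
    rw [suffixSum_eq_add N (by omega), show ℓ - 1 - (k + 1) + 1 = ℓ - 1 - k by omega,
      Nat.cast_add, hN, diffTuple, if_neg (by dsimp only; omega), ih (by omega)]
    simp only
    rw [show ℓ - 1 - (ℓ - 1 - (k + 1)) = k + 1 by omega,
      show ℓ - 2 - (ℓ - 1 - (k + 1)) = k by omega]
    ring

theorem exists_nat_eq_diffTuple {d : ℕ → ℚ} (hint : ∀ k < ℓ, ∃ z : ℤ, d k = z)
    (hmono : ∀ k, k + 1 < ℓ → d k ≤ d (k + 1)) (h0 : 0 ≤ d 0) :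
    ∃ N : Fin ℓ → ℕ, ∀ i, (N i : ℚ) = diffTuple ℓ d i := by
  have (i : Fin ℓ) : ∃ n : ℕ, (n : ℚ) = diffTuple ℓ d i := by
    obtain ⟨z, hz, hnonneg⟩ : ∃ z : ℤ, diffTuple ℓ d i = z ∧ 0 ≤ diffTuple ℓ d i := by
      unfold diffTuple
      split_ifs with hi
      · obtain ⟨z, hz⟩ := hint 0 (by omega)
        exact ⟨z, hz, h0⟩
      · obtain ⟨z, hz⟩ := hint (ℓ - 1 - i) (by omega)
        obtain ⟨z', hz'⟩ := hint (ℓ - 2 - i) (by omega)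
        have := hmono (ℓ - 2 - i) (by omega)
        rw [show ℓ - 2 - i + 1 = ℓ - 1 - i by omega] at this
        exact ⟨z - z', by push_cast; rw [hz, hz'], sub_nonneg.2 this⟩
    refine ⟨z.toNat, ?_⟩
    rw [hz] at hnonneg ⊢
    exact_mod_cast Int.toNat_of_nonneg (by exact_mod_cast hnonneg)
  choose N hN using this
  exact ⟨N, hN⟩

theorem shiftCoeff_of_lt_left {a : ℕ → ℚ} {r j k : ℕ} (h : j < k) : shiftCoeff a r j k = 0 := by
  simp [shiftCoeff, Nat.choose_eq_zero_of_lt h]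

theorem shiftCoeff_of_lt_right {a : ℕ → ℚ} {r j k : ℕ} (h : r < j) : shiftCoeff a r j k = 0 := by
  simp [shiftCoeff, S1_eq_zero_of_lt h]

theorem risingSum_eq_sum_S1 (x : ℕ → ℚ) :
    risingSum ℓ x = ∑ r ∈ range (ℓ + 1), ∑ j ∈ range (ℓ + 1), S1 r j / r ! * x (r - 1) ^ j := by
  rw [sum_range_succ', risingSum]
  simp only [S1_zero_left, Nat.cast_zero, zero_div, zero_mul, sum_const_zero, add_zero]
  refine sum_congr rfl fun k hk => ?_
  rw [ascPochhammer_eval_eq_sum_S1 k.succ_ne_zero (mem_range.1 hk), sum_div, Nat.add_sub_cancel]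
  exact sum_congr rfl fun j _ => by ring

theorem risingSum_add (y : ℚ) (a : ℕ → ℚ) :
    risingSum ℓ (fun k => y + a k) = ∑ k ∈ range (ℓ + 1),
      y ^ k * ∑ r ∈ range (ℓ + 1), ∑ j ∈ range (ℓ + 1), shiftCoeff a r j k := by
  have hexpand (r : ℕ) {j : ℕ} (hj : j ∈ range (ℓ + 1)) : S1 r j / r ! * (y + a (r - 1)) ^ j =
      ∑ k ∈ range (ℓ + 1), y ^ k * shiftCoeff a r j k := by
    rw [add_pow, mul_sum, ← sum_subset (range_subset_range.2 (mem_range.1 hj))]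
    · exact sum_congr rfl fun k _ => by simp only [shiftCoeff]; ring
    · intro k _ hk
      rw [shiftCoeff_of_lt_left (by simpa using hk), mul_zero]
  simp_rw [risingSum_eq_sum_S1, mul_sum]
  rw [sum_congr rfl fun r _ => sum_congr rfl fun _ => hexpand r]
  exact (sum_congr rfl fun r _ => sum_comm).trans sum_comm

end ValB

section Recursion

variable {ℓ β : ℕ} {c : ℕ → ℚ}

theorem sum_Ioc_shiftCoeff (hc : SatisfiesCRecursion ℓ β c) {k : ℕ} (hk : k < ℓ) :
    ∑ r ∈ Ioc k ℓ, ∑ j ∈ Ioc k r, shiftCoeff c r j k =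
      ((β : ℚ) ^ (ℓ - k) - 1) * ∑ i ∈ Icc k ℓ, (S1 i k : ℚ) / i ! := by
  have hfirst : ∑ j ∈ Ioc k (k + 1), shiftCoeff c (k + 1) j k = c k / k ! := by
    rw [Nat.Ioc_succ_singleton, sum_singleton, shiftCoeff, S1_self k.succ_ne_zero,
      Nat.choose_succ_self_right, Nat.add_sub_cancel_left, pow_one, Nat.add_sub_cancel,
      Nat.factorial_succ]
    push_cast
    field_simp
  have hrest (r j : ℕ) (hj : k < j) : shiftCoeff c r j k =
      S1 r j * j ! / (r ! * (j - k)!) * c (r - 1) ^ (j - k) / k ! := by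
    rw [shiftCoeff, Nat.cast_choose ℚ hj.le]
    field_simp
  rw [← Icc_add_one_left_eq_Ioc k ℓ, ← sum_Ioc_add_eq_sum_Icc (by omega : k + 1 ≤ ℓ),
    ← Icc_add_one_left_eq_Ioc, hfirst]
  simp_rw [← Icc_add_one_left_eq_Ioc k]
  rw [sum_congr rfl fun r _ => sum_congr rfl fun j (hj : j ∈ Icc (k + 1) r) =>
    hrest r j (mem_Icc.1 hj).1]
  simp_rw [← sum_div]
  rw [show k + 1 + 1 = k + 2 from rfl, hc k hk]
  field_simp
  ring

theorem sum_shiftCoeff (hc : SatisfiesCRecursion ℓ β c) {k : ℕ} (hk : k ≤ ℓ) :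
    ∑ r ∈ range (ℓ + 1), ∑ j ∈ range (ℓ + 1), shiftCoeff c r j k =
      (β : ℚ) ^ (ℓ - k) * ∑ i ∈ Icc k ℓ, (S1 i k : ℚ) / i ! := by
  have hinner (r : ℕ) (hr : r ∈ range (ℓ + 1)) :
      ∑ j ∈ range (ℓ + 1), shiftCoeff c r j k = ∑ j ∈ Icc k r, shiftCoeff c r j k := by
    refine (sum_subset (fun j hj => ?_) fun j _ hj => ?_).symm
    · simp only [mem_range, mem_Icc] at hr hj ⊢
      omega
    · rw [mem_Icc, not_and_or, not_le, not_le] at hj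
      rcases hj with h | h
      exacts [shiftCoeff_of_lt_left h, shiftCoeff_of_lt_right h]
  have houter : ∑ r ∈ range (ℓ + 1), ∑ j ∈ Icc k r, shiftCoeff c r j k =
      ∑ r ∈ Icc k ℓ, ∑ j ∈ Icc k r, shiftCoeff c r j k :=
    (sum_subset (fun r hr => by simp only [mem_range, mem_Icc] at hr ⊢; omega) fun r hr hr' =>
      by rw [Icc_eq_empty (by simp only [mem_range, mem_Icc] at hr hr'; omega), sum_empty]).symm
  have hdiag (r : ℕ) (hr : r ∈ Icc k ℓ) : ∑ j ∈ Icc k r, shiftCoeff c r j k =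
      ∑ j ∈ Ioc k r, shiftCoeff c r j k + S1 r k / r ! := by
    rw [← sum_Ioc_add_eq_sum_Icc (mem_Icc.1 hr).1]
    simp [shiftCoeff]
  rw [sum_congr rfl hinner, houter, sum_congr rfl hdiag, sum_add_distrib,
    ← sum_Ioc_add_eq_sum_Icc hk, Ioc_self, sum_empty, add_zero]
  rcases hk.lt_or_eq with hk | rfl
  · rw [sum_Ioc_shiftCoeff hc hk]
    ring
  · simp

theorem satisfiesCRecursion_one_zero : SatisfiesCRecursion ℓ 1 fun _ => 0 := by
  intro k _
  simp only [Nat.cast_one, one_pow, sub_self, mul_zero, zero_mul, zero_sub, zero_eq_neg]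
  refine sum_eq_zero fun i _ => sum_eq_zero fun j hj => ?_
  rw [zero_pow (Nat.sub_ne_zero_of_lt (mem_Icc.1 hj).1), mul_zero]

theorem risingSum_affine (hc : SatisfiesCRecursion ℓ β c) (x : ℚ) :
    risingSum ℓ (fun k => β * x + c k) = β ^ ℓ * risingSum ℓ fun _ => x := by
  -- `c = 0` solves the recursion for `β = 1`, so both sides expand through `sum_shiftCoeff`.
  have hx : risingSum ℓ (fun _ => x) = risingSum ℓ fun _ => 1 * x + 0 := by simp
  rw [hx, risingSum_add, risingSum_add, mul_sum]
  refine sum_congr rfl fun k hk => ?_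
  have hk : k ≤ ℓ := Nat.lt_succ_iff.1 (mem_range.1 hk)
  have hpow : (β : ℚ) ^ ℓ = β ^ k * β ^ (ℓ - k) := by rw [← pow_add, Nat.add_sub_cancel' hk]
  rw [sum_shiftCoeff hc hk, sum_shiftCoeff satisfiesCRecursion_one_zero hk, hpow]
  ring

theorem repB_pow_mul_valB_lastTuple (hc : SatisfiesCRecursion ℓ β c)
    {q : ℕ} {N : Fin ℓ → ℕ} (hN : ∀ i, (N i : ℚ) = diffTuple ℓ (fun k => β * q + c k) i) :
    repB ℓ (β ^ ℓ * valB ℓ (lastTuple ℓ q)) = N := by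
  have hval : valB ℓ N = β ^ ℓ * valB ℓ (lastTuple ℓ q) := by
    have : (valB ℓ N : ℚ) = β ^ ℓ * valB ℓ (lastTuple ℓ q) := by
      rw [cast_valB, cast_valB_lastTuple, risingSum_congr fun k hk => cast_suffixSum_eq hN hk,
        risingSum_affine hc]
    exact_mod_cast this
  rw [← hval, repB]
  exact Function.leftInverse_invFun valB_injective N

end Recursion

theorem wordB_of_eq_add_last {m : ℕ} {n n' : Fin (m + 1) → ℕ}
    (h : ∀ i : Fin m, n' i.castSucc = n i.castSucc) {t : ℕ}
    (hlast : n' (Fin.last m) = n (Fin.last m) + t) :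
    wordB (m + 1) n' = wordB (m + 1) n ++ List.replicate t (Fin.last m) := by
  simp only [wordB, List.ofFn_succ', List.concat_eq_append, List.flatten_append, h, hlast,
    List.replicate_add]
  simp

theorem wordB_of_diffTuple_add {m β q t : ℕ} {c : ℕ → ℚ} {N N' : Fin (m + 1) → ℕ}
    (hN : ∀ i, (N i : ℚ) = diffTuple (m + 1) (fun k => β * q + c k) i)
    (hN' : ∀ i, (N' i : ℚ) = diffTuple (m + 1) (fun k => β * ↑(q + t) + c k) i) :
    wordB (m + 1) N' = wordB (m + 1) N ++ List.replicate (β * t) (Fin.last m) := by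
  apply wordB_of_eq_add_last
  · intro i
    rw [← Nat.cast_inj (R := ℚ), hN, hN']
    simp [diffTuple, i.is_lt.ne]
  · rw [← Nat.cast_inj (R := ℚ), Nat.cast_add, hN, hN']
    simp only [diffTuple, Fin.val_last, add_tsub_cancel_right, ↓reduceIte, Nat.cast_add,
      Nat.cast_mul]
    ring

namespace Language
variable {α : Type*}

theorem isRegular_of_finite {L : Language α} (h : (L : Set (List α)).Finite) : L.IsRegular := by
  apply IsRegular.of_finite_range_leftQuotient
  refine (((h.biUnion fun w _ => w.inits.finite_toSet).image L.leftQuotient).insert 0).subset ?_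
  rintro _ ⟨v, rfl⟩
  by_cases hv : ∃ s, v ++ s ∈ L
  · obtain ⟨s, hs⟩ := hv
    exact Or.inr ⟨v, Set.mem_biUnion hs ((List.mem_inits _ _).2 (List.prefix_append v s)), rfl⟩
  · exact Or.inl (Set.eq_empty_of_forall_notMem fun s hs => hv ⟨s, hs⟩)

theorem mem_leftQuotient_append_replicate {u s : List α} {x : α} {b m : ℕ} :
    s ∈ leftQuotient {w | ∃ t, w = u ++ List.replicate (b * t) x} (u ++ List.replicate m x) ↔
      s = List.replicate s.length x ∧ b ∣ m + s.length := by
  change (∃ t, u ++ List.replicate m x ++ s = u ++ List.replicate (b * t) x) ↔ _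
  simp only [List.append_assoc, List.append_cancel_left_eq, List.append_eq_replicate_iff,
    List.length_replicate, true_and, Dvd.dvd]
  rw [exists_and_right, and_comm]

theorem leftQuotient_append_replicate_mod (u : List α) (x : α) (b m : ℕ) :
    leftQuotient {w | ∃ t, w = u ++ List.replicate (b * t) x} (u ++ List.replicate m x) =
      leftQuotient {w | ∃ t, w = u ++ List.replicate (b * t) x}
        (u ++ List.replicate (m % b) x) := by
  ext s
  rw [mem_leftQuotient_append_replicate, mem_leftQuotient_append_replicate,
    Nat.dvd_iff_mod_eq_zero, Nat.dvd_iff_mod_eq_zero, Nat.add_mod, Nat.add_mod_mod]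

theorem isRegular_append_replicate_mul (u : List α) (x : α) {b : ℕ} (hb : 0 < b) :
    IsRegular {w | ∃ t, w = u ++ List.replicate (b * t) x} := by
  set L : Language α := {w | ∃ t, w = u ++ List.replicate (b * t) x}
  apply IsRegular.of_finite_range_leftQuotient
  refine ((((Set.finite_Iio b).image fun m => L.leftQuotient (u ++ List.replicate m x)).union
    (u.inits.finite_toSet.image L.leftQuotient)).insert 0).subset ?_
  rintro _ ⟨v, rfl⟩
  by_cases hv : ∃ s, v ++ s ∈ L
  · obtain ⟨s, t, hs⟩ := hv
    rcases List.append_eq_append_iff.1 hs with ⟨a, rfl, -⟩ | ⟨c, rfl, hc⟩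
    · exact Or.inr (Or.inr ⟨v, (List.mem_inits _ _).2 (List.prefix_append v a), rfl⟩)
    · obtain ⟨-, hc, -⟩ := List.append_eq_replicate_iff.1 hc.symm
      refine Or.inr (Or.inl ⟨c.length % b, Nat.mod_lt _ hb, ?_⟩)
      rw [hc, List.length_replicate]
      exact (leftQuotient_append_replicate_mod u x b _).symm
  · exact Or.inl (Set.eq_empty_of_forall_notMem fun s hs => hv ⟨s, hs⟩)

theorem isRegular_of_add_eq_append_replicate {g : ℕ → List α} (q₀ : ℕ) (x : α) {b : ℕ}
    (hb : 0 < b) (h : ∀ t, g (q₀ + t) = g q₀ ++ List.replicate (b * t) x) :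
    IsRegular {w | ∃ q, w = g q} := by
  have hlang : {w | ∃ q, w = g q} =
      g '' Set.Iio q₀ ∪ {w | ∃ t, w = g q₀ ++ List.replicate (b * t) x} := by
    ext w
    constructor
    · rintro ⟨q, rfl⟩
      rcases lt_or_ge q q₀ with hq | hq
      · exact Or.inl ⟨q, hq, rfl⟩
      · exact Or.inr ⟨q - q₀, by rw [← h, Nat.add_sub_cancel' hq]⟩
    · rintro (⟨q, -, rfl⟩ | ⟨t, rfl⟩)
      exacts [⟨q, rfl⟩, ⟨q₀ + t, (h t).symm⟩]
  rw [hlang]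
  exact (isRegular_of_finite ((Set.finite_Iio q₀).image g)).add
    (isRegular_append_replicate_mul _ _ hb)

end Language

/-- If the constants `c_{ℓ−1}, …, c_0` given by the recursion are integers and
nonincreasing (`c_{ℓ−1} ≥ ⋯ ≥ c_0`), then for all `q` with `βq + c_0 ≥ 0`,
`rep_ℓ(β^ℓ val_ℓ(a_ℓ^q)) = (c_{ℓ−1}−c_{ℓ−2}, …, c_1−c_0, βq + c_0)`; in particular
`rep_ℓ(β^ℓ val_ℓ(a_ℓ^*))` is a regular language. -/
theorem repB_pow_mul_val_last (ℓ β : ℕ) (hℓ : 1 ≤ ℓ) (hβ : 1 ≤ β) (c : ℕ → ℚ)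
    (hc : ∀ k < ℓ, c k =
      (Nat.factorial k : ℚ) * ((β : ℚ) ^ (ℓ - k) - 1) *
          (∑ i ∈ Finset.Icc k ℓ, (S1 i k : ℚ) / (Nat.factorial i : ℚ)) -
        ∑ i ∈ Finset.Icc (k + 2) ℓ, ∑ j ∈ Finset.Icc (k + 1) i,
          ((S1 i j : ℚ) * (Nat.factorial j : ℚ)) /
              ((Nat.factorial i : ℚ) * (Nat.factorial (j - k) : ℚ)) *
            (c (i - 1)) ^ (j - k))
    (hint : ∀ k < ℓ, ∃ z : ℤ, c k = (z : ℚ))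
    (hmono : ∀ k : ℕ, k + 1 < ℓ → c k ≤ c (k + 1)) :
    (∀ q : ℕ, 0 ≤ (β : ℚ) * (q : ℚ) + c 0 →
      ∀ i : Fin ℓ,
        ((repB ℓ (β ^ ℓ * valB ℓ (lastTuple ℓ q)) i : ℕ) : ℚ) =
          if (i : ℕ) = ℓ - 1 then (β : ℚ) * (q : ℚ) + c 0
          else c (ℓ - 1 - (i : ℕ)) - c (ℓ - 2 - (i : ℕ))) ∧
      Language.IsRegular
        {w : List (Fin ℓ) | ∃ q : ℕ, w = wordB ℓ (repB ℓ (β ^ ℓ * valB ℓ (lastTuple ℓ q)))} := by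
  have hN (q : ℕ) (hq : 0 ≤ (β : ℚ) * q + c 0) :
      ∃ N : Fin ℓ → ℕ, ∀ i, (N i : ℚ) = diffTuple ℓ (fun k => β * q + c k) i := by
    refine exists_nat_eq_diffTuple (fun k hk => ?_) (fun k hk => by linarith [hmono k hk]) hq
    obtain ⟨z, hz⟩ := hint k hk
    exact ⟨β * q + z, by rw [hz]; push_cast; rfl⟩
  choose! N hN using hN
  have hrep (q : ℕ) (hq : 0 ≤ (β : ℚ) * q + c 0) :
      repB ℓ (β ^ ℓ * valB ℓ (lastTuple ℓ q)) = N q :=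
    repB_pow_mul_valB_lastTuple hc (hN q hq)
  refine ⟨fun q hq i => ?_, ?_⟩
  · rw [hrep q hq, hN q hq i, diffTuple]
    split_ifs <;> ring
  obtain ⟨m, rfl⟩ : ∃ m, ℓ = m + 1 := ⟨ℓ - 1, by omega⟩
  have hge (q : ℕ) (hq : ⌈-c 0⌉₊ ≤ q) : 0 ≤ (β : ℚ) * q + c 0 := by
    have h1 : -c 0 ≤ q := (Nat.le_ceil _).trans (by exact_mod_cast hq)
    have h2 : (1 : ℚ) ≤ β := by exact_mod_cast hβ
    nlinarith [(Nat.cast_nonneg q : (0 : ℚ) ≤ q)]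
  refine Language.isRegular_of_add_eq_append_replicate ⌈-c 0⌉₊ (Fin.last m) hβ fun t => ?_
  have ht := hge _ (Nat.le_add_right ⌈-c 0⌉₊ t)
  rw [hrep _ ht, hrep _ (hge _ le_rfl)]
  exact wordB_of_diffTuple_add (hN _ (hge _ le_rfl)) (hN _ ht)
end
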